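/- arXiv:2108.10784 — 2 statements merged into one kernel-verified Lean document; each statement's English description precedes it below -/
import Mathlib

section
/- Let A, B be finite types, N : A → Finset B, F a type, and g : A → F with the property that g a = g a' implies N a = N a'. Let A' be a finite subset of A that is complete, i.e., A' contains every a : A with g a ∈ g '' A', and suppose |A'| ≤ |⋃_{a ∈ A'} N a|. Then every subset A'' ⊆ A' with g '' A'' = g '' A' also satisfies |A''| ≤ |⋃_{a ∈ A''} N a|. -/
theorem Finset.biUnion_subset_biUnion_of_image_subset {A B F : Type*} [DecidableEq B]
    {N : A → Finset B} {g : A → F} (hg : ∀ a a' : A, g a = g a' → N a = N a')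
    {s t : Finset A} (hst : g '' (↑s : Set A) ⊆ g '' (↑t : Set A)) :
    s.biUnion N ⊆ t.biUnion N := by
  refine Finset.biUnion_subset.mpr fun a ha => ?_
  obtain ⟨a', ha', hga'⟩ := hst ⟨a, ha, rfl⟩
  exact hg a' a hga' ▸ Finset.subset_biUnion_of_mem N ha'

theorem Finset.biUnion_eq_biUnion_of_image_eq {A B F : Type*} [DecidableEq B]
    {N : A → Finset B} {g : A → F} (hg : ∀ a a' : A, g a = g a' → N a = N a')
    {s t : Finset A} (hst : g '' (↑s : Set A) = g '' (↑t : Set A)) :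
    s.biUnion N = t.biUnion N :=
  (biUnion_subset_biUnion_of_image_subset hg hst.le).antisymm
    (biUnion_subset_biUnion_of_image_subset hg hst.ge)

theorem hall_condition_of_complete_general {A B F : Type*} [DecidableEq B]
    (N : A → Finset B) (g : A → F)
    (hg : ∀ a a' : A, g a = g a' → N a = N a')
    (A' : Finset A)
    (hhall : A'.card ≤ (A'.biUnion N).card) :
    ∀ A'' : Finset A, A'' ⊆ A' → g '' (↑A'' : Set A) = g '' (↑A' : Set A) →
      A''.card ≤ (A''.biUnion N).card := by
  intro A'' hsub himg
  calc A''.card ≤ A'.card := Finset.card_le_card hsub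
    _ ≤ (A'.biUnion N).card := hhall
    _ = (A''.biUnion N).card := by rw [Finset.biUnion_eq_biUnion_of_image_eq hg himg]

/-- Claim 1 of the paper, stated abstractly: if a complete subset `A'` (one containing
every element whose group occurs among the groups of `A'`) satisfies Hall's condition,
then so does every subset `A'' ⊆ A'` covering the same groups. -/
theorem hall_condition_of_complete {A B F : Type*} [Fintype A] [Fintype B] [DecidableEq B]
    (N : A → Finset B) (g : A → F)
    (hg : ∀ a a' : A, g a = g a' → N a = N a')
    (A' : Finset A)
    (hcomplete : ∀ a : A, (∃ a' ∈ A', g a = g a') → a ∈ A')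
    (hhall : A'.card ≤ (A'.biUnion N).card) :
    ∀ A'' : Finset A, A'' ⊆ A' → g '' (↑A'' : Set A) = g '' (↑A' : Set A) →
      A''.card ≤ (A''.biUnion N).card :=
  hall_condition_of_complete_general N g hg A' hhall
end

section
/- Let A, B be finite types, N : A → Finset B, F a type, and g : A → F with the property that g a = g a' implies N a = N a'. Suppose that Hall's condition |A'| ≤ |⋃_{a ∈ A'} N a| holds for every complete finite subset A' of A (i.e., every subset of the form g⁻¹(S) for S ⊆ F). Then there exists an injective function M : A → B with M a ∈ N a for every a : A. -/
open Finset

section Saturation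

variable {A F : Type*} [Fintype A] (g : A → F)

/-- The saturation `g⁻¹ (g '' s)` of `s`: the complete subsets are exactly the saturated ones. -/
noncomputable def saturation (s : Finset A) : Finset A := by
  classical exact univ.filter fun a => ∃ a' ∈ s, g a = g a'

variable {g}

theorem mem_saturation {s : Finset A} {a : A} : a ∈ saturation g s ↔ ∃ a' ∈ s, g a = g a' := by
  classical simp [saturation]

theorem subset_saturation (s : Finset A) : s ⊆ saturation g s :=
  fun a ha => mem_saturation.2 ⟨a, ha, rfl⟩

theorem mem_saturation_of_group_mem {s : Finset A} {a : A}
    (h : ∃ a' ∈ saturation g s, g a = g a') : a ∈ saturation g s := by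
  obtain ⟨a', ha', hga⟩ := h
  obtain ⟨a'', ha'', hga'⟩ := mem_saturation.1 ha'
  exact mem_saturation.2 ⟨a'', ha'', hga.trans hga'⟩

theorem biUnion_saturation {B : Type*} [DecidableEq B] {N : A → Finset B}
    (hg : ∀ a a' : A, g a = g a' → N a = N a') (s : Finset A) :
    (saturation g s).biUnion N = s.biUnion N := by
  refine (biUnion_subset_biUnion_of_subset_left N (subset_saturation s)).antisymm' ?_
  intro b hb
  obtain ⟨a, ha, hba⟩ := mem_biUnion.1 hb
  obtain ⟨a', ha', hga⟩ := mem_saturation.1 ha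
  exact mem_biUnion.2 ⟨a', ha', hg a a' hga ▸ hba⟩

end Saturation

theorem matching_of_hall_on_complete_subsets_general {A B F : Type*} [Fintype A]
    [DecidableEq B] (N : A → Finset B) (g : A → F)
    (hg : ∀ a a' : A, g a = g a' → N a = N a')
    (hhall : ∀ A' : Finset A, (∀ a : A, (∃ a' ∈ A', g a = g a') → a ∈ A') →
      A'.card ≤ (A'.biUnion N).card) :
    ∃ M : A → B, Function.Injective M ∧ ∀ a : A, M a ∈ N a := by
  refine (all_card_le_biUnion_card_iff_exists_injective N).1 fun s => ?_
  calc s.card ≤ (saturation g s).card := card_le_card (subset_saturation s)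
    _ ≤ ((saturation g s).biUnion N).card :=
        hhall _ fun _ => mem_saturation_of_group_mem
    _ = (s.biUnion N).card := by rw [biUnion_saturation hg]

/-- If Hall's condition holds for every complete finite subset of `A` (with respect to a
grouping `g` under which grouped elements have identical neighborhoods), then there is a
matching saturating `A`. -/
theorem matching_of_hall_on_complete_subsets {A B F : Type*} [Fintype A] [Fintype B]
    [DecidableEq B] (N : A → Finset B) (g : A → F)
    (hg : ∀ a a' : A, g a = g a' → N a = N a')
    (hhall : ∀ A' : Finset A, (∀ a : A, (∃ a' ∈ A', g a = g a') → a ∈ A') →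
      A'.card ≤ (A'.biUnion N).card) :
    ∃ M : A → B, Function.Injective M ∧ ∀ a : A, M a ∈ N a :=
  matching_of_hall_on_complete_subsets_general N g hg hhall
end
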